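/- arXiv:1705.03196 — 5 statements merged into one kernel-verified Lean document; each statement's English description precedes it below -/
import Mathlib

section
/- For any probability weight vector w (with nonnegative entries summing to 1) and any random vector Y with Y = ν + LZ where Z is standard d-dimensional Gaussian and LLᵀ = Σ, the probability P(1ᵀ exp(Y) ≤ γ) is at most Φ̄((wᵀν − ln γ − wᵀ ln w)/√(wᵀΣw)), where Φ̄ is the standard normal complementary cdf. -/
open MeasureTheory ProbabilityTheory Matrix

/-- The standard normal complementary cdf `Φ̄`. -/
noncomputable def stdGaussianCCDF (x : ℝ) : ℝ :=
  ((gaussianReal 0 1) (Set.Ioi x)).toReal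

/-!
By Jensen's inequality for `exp`, `exp (wᵀy - wᵀ ln w) ≤ 1ᵀ exp y`, so the event
`1ᵀ exp Y ≤ γ` is contained in the half-space event `wᵀY ≤ ln γ + wᵀ ln w`. The linear
functional `wᵀY` is Gaussian with mean `wᵀν` and variance `‖Lᵀw‖² = wᵀΣw`, which gives the
probability of the half-space exactly.
-/

open Real Set WithLp
open scoped NNReal

section

variable {ι : Type*} [Fintype ι]

theorem exp_sum_mul_sub_log_le_sum_exp {w : ι → ℝ} (hw0 : ∀ i, 0 ≤ w i) (hw1 : ∑ i, w i = 1)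
    (y : ι → ℝ) : exp (∑ i, w i * (y i - log (w i))) ≤ ∑ i, exp (y i) := by
  have hterm (i : ι) : w i * exp (y i - log (w i)) ≤ exp (y i) := by
    rcases (hw0 i).eq_or_lt with hi | hi
    · simp [← hi, (exp_pos _).le]
    · rw [exp_sub, exp_log hi, mul_div_cancel₀ _ hi.ne']
  calc exp (∑ i, w i * (y i - log (w i)))
      ≤ ∑ i, w i * exp (y i - log (w i)) :=
        convexOn_exp.map_sum_le (fun i _ => hw0 i) hw1 (fun _ _ => mem_univ _)
    _ ≤ ∑ i, exp (y i) := Finset.sum_le_sum fun i _ => hterm i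

theorem setOf_sum_exp_le_subset_setOf_dotProduct_le {w : ι → ℝ} (hw0 : ∀ i, 0 ≤ w i)
    (hw1 : ∑ i, w i = 1) (γ : ℝ) :
    {y : ι → ℝ | ∑ i, exp (y i) ≤ γ} ⊆ {y | w ⬝ᵥ y ≤ log γ + ∑ i, w i * log (w i)} := by
  intro y (hy : ∑ i, exp (y i) ≤ γ)
  have hexp := (exp_sum_mul_sub_log_le_sum_exp hw0 hw1 y).trans hy
  have hlog := (le_log_iff_exp_le ((exp_pos _).trans_le hexp)).2 hexp
  simp only [mul_sub, Finset.sum_sub_distrib] at hlog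
  exact (sub_le_iff_le_add.1 hlog : _)

theorem map_pi_gaussianReal_dotProduct (a : ι → ℝ) :
    (Measure.pi fun _ : ι => gaussianReal 0 1).map (a ⬝ᵥ ·) =
      gaussianReal 0 (a ⬝ᵥ a).toNNReal := by
  let l := innerSL ℝ (toLp 2 a)
  have hcomp : (a ⬝ᵥ ·) = l ∘ toLp 2 := by
    ext z
    simp [l, dotProduct, PiLp.inner_apply, mul_comm]
  rw [hcomp, ← Measure.map_map (by fun_prop) (by fun_prop), map_pi_eq_stdGaussian,
    IsGaussian.map_eq_gaussianReal, integral_strongDual_stdGaussian,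
    variance_dual_stdGaussian, innerSL_apply_norm, EuclideanSpace.real_norm_sq_eq]
  simp [dotProduct, sq]

theorem map_pi_gaussianReal_affine_dotProduct {κ : Type*} [Fintype κ]
    (L : Matrix ι κ ℝ) (ν w : ι → ℝ) :
    ((Measure.pi fun _ : κ => gaussianReal 0 1).map (fun z => ν + L *ᵥ z)).map (w ⬝ᵥ ·) =
      gaussianReal (w ⬝ᵥ ν) (w ⬝ᵥ (L * Lᵀ) *ᵥ w).toNNReal := by
  have hcomp : (w ⬝ᵥ ·) ∘ (fun z => ν + L *ᵥ z) = (w ⬝ᵥ ν + ·) ∘ (w ᵥ* L ⬝ᵥ ·) := by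
    ext z
    simp [dotProduct_add, dotProduct_mulVec]
  have hvar : w ᵥ* L ⬝ᵥ w ᵥ* L = w ⬝ᵥ (L * Lᵀ) *ᵥ w := by
    rw [← mulVec_mulVec, dotProduct_mulVec, mulVec_transpose]
  rw [Measure.map_map (by fun_prop) (by fun_prop), hcomp,
    ← Measure.map_map (by fun_prop) (by fun_prop), map_pi_gaussianReal_dotProduct,
    gaussianReal_map_const_add, zero_add, hvar]

end

theorem toReal_gaussianReal_Iic {m : ℝ} {v : ℝ≥0} (hv : v ≠ 0) (c : ℝ) :
    (gaussianReal m v (Iic c)).toReal = stdGaussianCCDF ((m - c) / √v) := by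
  have hs : 0 < √(v : ℝ) := by positivity
  have hlaw : gaussianReal m v = (gaussianReal 0 1).map (fun x => m - √v * x) := by
    rw [← Function.comp_def (m - ·) (√v * ·), ← Measure.map_map (by fun_prop) (by fun_prop),
      gaussianReal_map_const_mul, gaussianReal_map_const_sub]
    congr
    · simp
    · ext; simp
  have hpre : (fun x => m - √v * x) ⁻¹' Iic c = Ici ((m - c) / √v) := by
    ext x
    simp [div_le_iff₀ hs, mul_comm, add_comm]
  have := nullSingletonClass_gaussianReal (μ := 0) one_ne_zero
  rw [stdGaussianCCDF, hlaw, Measure.map_apply (by fun_prop) measurableSet_Iic, hpre,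
    measure_congr Ioi_ae_eq_Ici]

theorem sln_left_tail_gaussian_bound_general {d : ℕ}
    (L : Matrix (Fin d) (Fin d) ℝ) (ν : Fin d → ℝ)
    (hpos : (L * Lᵀ).PosDef)
    (w : Fin d → ℝ) (hw0 : ∀ i, 0 ≤ w i) (hw1 : ∑ i, w i = 1)
    (γ : ℝ) :
    (((Measure.pi fun _ : Fin d => gaussianReal 0 1).map
        (fun z => ν + L.mulVec z)) {y | ∑ i, Real.exp (y i) ≤ γ}).toReal ≤
      stdGaussianCCDF
        ((∑ i, w i * ν i - Real.log γ - ∑ i, w i * Real.log (w i)) /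
          Real.sqrt (w ⬝ᵥ (L * Lᵀ).mulVec w)) := by
  have hw : w ≠ 0 := by
    rintro rfl
    simp at hw1
  have hvar : 0 < w ⬝ᵥ (L * Lᵀ) *ᵥ w := by simpa using hpos.dotProduct_mulVec_pos hw
  set Y := (Measure.pi fun _ : Fin d => gaussianReal 0 1).map (fun z => ν + L *ᵥ z)
  set c := log γ + ∑ i, w i * log (w i)
  calc (Y {y | ∑ i, exp (y i) ≤ γ}).toReal
      ≤ (Y {y | w ⬝ᵥ y ≤ c}).toReal := ENNReal.toReal_mono (measure_ne_top _ _)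
        (measure_mono (setOf_sum_exp_le_subset_setOf_dotProduct_le hw0 hw1 γ))
    _ = (gaussianReal (w ⬝ᵥ ν) (w ⬝ᵥ (L * Lᵀ) *ᵥ w).toNNReal (Iic c)).toReal := by
        rw [← map_pi_gaussianReal_affine_dotProduct,
          Measure.map_apply (by fun_prop) measurableSet_Iic]
        rfl
    _ = _ := by
        rw [toReal_gaussianReal_Iic (by simpa using hvar), Real.coe_toNNReal _ hvar.le, sub_sub]
        rfl

/-- For any probability weight vector `w` and `Y = ν + L Z` with `Z`
standard `d`-dimensional Gaussian and `L Lᵀ = Σ`, the probability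
`P(1ᵀ exp(Y) ≤ γ)` is bounded by `Φ̄((wᵀν − ln γ − wᵀ ln w)/√(wᵀ Σ w))`. -/
theorem sln_left_tail_gaussian_bound {d : ℕ}
    (L : Matrix (Fin d) (Fin d) ℝ) (ν : Fin d → ℝ)
    (hpos : (L * Lᵀ).PosDef)
    (w : Fin d → ℝ) (hw0 : ∀ i, 0 ≤ w i) (hw1 : ∑ i, w i = 1)
    (γ : ℝ) (hγ : 0 < γ) :
    (((Measure.pi fun _ : Fin d => gaussianReal 0 1).map
        (fun z => ν + L.mulVec z)) {y | ∑ i, Real.exp (y i) ≤ γ}).toReal ≤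
      stdGaussianCCDF
        ((∑ i, w i * ν i - Real.log γ - ∑ i, w i * Real.log (w i)) /
          Real.sqrt (w ⬝ᵥ (L * Lᵀ).mulVec w)) :=
  sln_left_tail_gaussian_bound_general L ν hpos w hw0 hw1 γ
end

section
/- For any probability weight vector w and any γ > 0, the log-normal sum left-tail probability satisfies P(1ᵀ exp(Y) ≤ γ) ≤ exp(−(wᵀν − ln γ − wᵀ ln w)² / (2 wᵀΣw)), whenever wᵀν − ln γ − wᵀ ln w ≥ 0. -/
/-!
By Jensen's inequality for `exp` (Gibbs' variational principle),
`wᵀy - wᵀ ln w ≤ ln (1ᵀ exp y)` for every `y`, so the event `1ᵀ exp Y ≤ γ` is contained in the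
half-line event `wᵀY ≤ ln γ + wᵀ ln w`. The scalar `wᵀY` is Gaussian with mean `wᵀν` and variance
`wᵀΣw`, and the Chernoff bound for its lower tail at distance `wᵀν - ln γ - wᵀ ln w` from the mean
gives the estimate.
-/

open MeasureTheory ProbabilityTheory Matrix Real
open scoped NNReal

theorem Real.exp_sum_mul_sub_sum_mul_log_le_sum_exp {ι : Type*} {s : Finset ι} {w : ι → ℝ}
    (hw0 : ∀ i ∈ s, 0 ≤ w i) (hw1 : ∑ i ∈ s, w i = 1) (y : ι → ℝ) :
    exp (∑ i ∈ s, w i * y i - ∑ i ∈ s, w i * log (w i)) ≤ ∑ i ∈ s, exp (y i) := by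
  have hweighted : ∀ i ∈ s, w i * exp (y i - log (w i)) ≤ exp (y i) := by
    intro i hi
    rcases (hw0 i hi).eq_or_lt with h0 | h0
    · simp [← h0, (exp_pos _).le]
    · rw [exp_sub, exp_log h0, mul_div_cancel₀ _ h0.ne']
  calc exp (∑ i ∈ s, w i * y i - ∑ i ∈ s, w i * log (w i))
      = exp (∑ i ∈ s, w i • (y i - log (w i))) := by
        simp only [smul_eq_mul, mul_sub, Finset.sum_sub_distrib]
    _ ≤ ∑ i ∈ s, w i • exp (y i - log (w i)) :=
        convexOn_exp.map_sum_le hw0 hw1 fun _ _ => Set.mem_univ _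
    _ ≤ ∑ i ∈ s, exp (y i) := Finset.sum_le_sum hweighted

theorem Matrix.dotProduct_mul_transpose_mulVec {ι κ : Type*} [Fintype ι] [Fintype κ]
    (L : Matrix ι κ ℝ) (w : ι → ℝ) : w ⬝ᵥ (L * Lᵀ) *ᵥ w = (w ᵥ* L) ⬝ᵥ (w ᵥ* L) := by
  rw [← mulVec_mulVec, dotProduct_mulVec, mulVec_transpose]

namespace ProbabilityTheory

/-- For `v = 0` the right-hand side is `exp 0 = 1`, since `x / 0 = 0`. -/
theorem gaussianReal_real_Iic_sub_le (m : ℝ) (v : ℝ≥0) {a : ℝ} (ha : 0 ≤ a) :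
    (gaussianReal m v).real (Set.Iic (m - a)) ≤ exp (-a ^ 2 / (2 * v)) := by
  rcases eq_or_ne v 0 with rfl | hv
  · simp [measureReal_le_one]
  have hv' : (0 : ℝ) < v := by positivity
  calc (gaussianReal m v).real (Set.Iic (m - a))
      ≤ exp (-(-a / v) * (m - a)) * mgf id (gaussianReal m v) (-a / v) :=
        measure_le_le_exp_mul_mgf (m - a) (div_nonpos_of_nonpos_of_nonneg (neg_nonpos.2 ha) hv'.le)
          (integrable_exp_mul_gaussianReal _)
    _ = exp (-a ^ 2 / (2 * v)) := by
        rw [mgf_id_gaussianReal, ← exp_add]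
        congr 1
        field_simp
        ring

/-- Identifying `ι → ℝ` with `EuclideanSpace ℝ ι` turns the standard product Gaussian into
`stdGaussian`, and `u ⬝ᵥ ·` into the continuous linear form `⟪u, ·⟫`. -/
theorem map_dotProduct_pi_gaussianReal {ι : Type*} [Fintype ι] (u : ι → ℝ) :
    (Measure.pi fun _ : ι => gaussianReal 0 1).map (u ⬝ᵥ ·) =
      gaussianReal 0 (u ⬝ᵥ u).toNNReal := by
  set L : StrongDual ℝ (EuclideanSpace ℝ ι) := innerSL ℝ (WithLp.toLp 2 u)
  have hL : (u ⬝ᵥ ·) = L ∘ WithLp.toLp 2 := by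
    ext z
    simp [L, dotProduct, PiLp.inner_apply, mul_comm]
  rw [hL, ← Measure.map_map L.continuous.measurable (by fun_prop), map_pi_eq_stdGaussian,
    IsGaussian.map_eq_gaussianReal, integral_strongDual_stdGaussian, variance_dual_stdGaussian,
    innerSL_apply_norm, EuclideanSpace.real_norm_sq_eq]
  simp [dotProduct, sq]

theorem map_dotProduct_map_affine_pi_gaussianReal {ι κ : Type*} [Fintype ι] [Fintype κ]
    (L : Matrix ι κ ℝ) (ν w : ι → ℝ) :
    ((Measure.pi fun _ : κ => gaussianReal 0 1).map (fun z => ν + L *ᵥ z)).map (w ⬝ᵥ ·) =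
      gaussianReal (w ⬝ᵥ ν) (w ⬝ᵥ (L * Lᵀ) *ᵥ w).toNNReal := by
  have hcomp : (w ⬝ᵥ ·) ∘ (fun z => ν + L *ᵥ z) = (w ⬝ᵥ ν + ·) ∘ ((w ᵥ* L) ⬝ᵥ ·) := by
    ext z
    simp [dotProduct_add, dotProduct_mulVec]
  rw [Measure.map_map (by fun_prop) (by fun_prop), hcomp,
    ← Measure.map_map (by fun_prop) (by fun_prop), map_dotProduct_pi_gaussianReal,
    gaussianReal_map_const_add, zero_add, dotProduct_mul_transpose_mulVec]

end ProbabilityTheory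

theorem sln_left_tail_chernoff_bound_general {d : ℕ}
    (L : Matrix (Fin d) (Fin d) ℝ) (ν : Fin d → ℝ)
    (w : Fin d → ℝ) (hw0 : ∀ i, 0 ≤ w i) (hw1 : ∑ i, w i = 1)
    (γ : ℝ) (hγ : 0 < γ)
    (hnum : 0 ≤ ∑ i, w i * ν i - Real.log γ - ∑ i, w i * Real.log (w i)) :
    (((Measure.pi fun _ : Fin d => gaussianReal 0 1).map
        (fun z => ν + L.mulVec z)) {y | ∑ i, Real.exp (y i) ≤ γ}).toReal ≤
      Real.exp (-(∑ i, w i * ν i - Real.log γ - ∑ i, w i * Real.log (w i)) ^ 2 /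
        (2 * (w ⬝ᵥ (L * Lᵀ).mulVec w))) := by
  set P := (Measure.pi fun _ : Fin d => gaussianReal 0 1).map (fun z => ν + L *ᵥ z)
  set a := ∑ i, w i * ν i - log γ - ∑ i, w i * log (w i)
  have hsub : {y : Fin d → ℝ | ∑ i, exp (y i) ≤ γ} ⊆ (w ⬝ᵥ ·) ⁻¹' Set.Iic (w ⬝ᵥ ν - a) := by
    intro y hy
    have hgibbs : ∑ i, w i * y i - ∑ i, w i * log (w i) ≤ log γ := (le_log_iff_exp_le hγ).2
      ((exp_sum_mul_sub_sum_mul_log_le_sum_exp (fun i _ => hw0 i) hw1 y).trans hy)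
    simp only [Set.mem_preimage, Set.mem_Iic, a, dotProduct]
    linarith
  have hvar : 0 ≤ w ⬝ᵥ (L * Lᵀ) *ᵥ w := by
    rw [dotProduct_mul_transpose_mulVec]
    exact Finset.sum_nonneg fun _ _ => mul_self_nonneg _
  calc P.real {y | ∑ i, exp (y i) ≤ γ}
      ≤ P.real ((w ⬝ᵥ ·) ⁻¹' Set.Iic (w ⬝ᵥ ν - a)) := measureReal_mono hsub
    _ = (P.map (w ⬝ᵥ ·)).real (Set.Iic (w ⬝ᵥ ν - a)) :=
        (map_measureReal_apply (by fun_prop) measurableSet_Iic).symm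
    _ ≤ exp (-a ^ 2 / (2 * (w ⬝ᵥ (L * Lᵀ) *ᵥ w).toNNReal)) := by
        rw [map_dotProduct_map_affine_pi_gaussianReal]
        exact gaussianReal_real_Iic_sub_le _ _ hnum
    _ = _ := by rw [Real.coe_toNNReal _ hvar]

/-- Chernoff-type bound for the left tail of a sum of dependent
log-normals: `P(1ᵀ exp(Y) ≤ γ) ≤ exp(−(wᵀν − ln γ − wᵀ ln w)²/(2 wᵀ Σ w))`
whenever `wᵀν − ln γ − wᵀ ln w ≥ 0`, where `Y ~ N(ν, Σ)` with `Σ = L Lᵀ`. -/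
theorem sln_left_tail_chernoff_bound {d : ℕ}
    (L : Matrix (Fin d) (Fin d) ℝ) (ν : Fin d → ℝ)
    (hpos : (L * Lᵀ).PosDef)
    (w : Fin d → ℝ) (hw0 : ∀ i, 0 ≤ w i) (hw1 : ∑ i, w i = 1)
    (γ : ℝ) (hγ : 0 < γ)
    (hnum : 0 ≤ ∑ i, w i * ν i - Real.log γ - ∑ i, w i * Real.log (w i)) :
    (((Measure.pi fun _ : Fin d => gaussianReal 0 1).map
        (fun z => ν + L.mulVec z)) {y | ∑ i, Real.exp (y i) ≤ γ}).toReal ≤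
      Real.exp (-(∑ i, w i * ν i - Real.log γ - ∑ i, w i * Real.log (w i)) ^ 2 /
        (2 * (w ⬝ᵥ (L * Lᵀ).mulVec w))) :=
  sln_left_tail_chernoff_bound_general L ν w hw0 hw1 γ hγ hnum
end

section
/- Let N = Σ_{i=1}^d 1{Xᵢ > γ} and let ℓ̂₁ = ℓ_as(γ)/N under the mixture density g(x) = φ_Σ(x − ν) Σ_k 1{x_k > γ} / ℓ_as(γ), where ℓ_as(γ) = Σ_k P(X_k > γ). Then ℓ̂₁ is an unbiased estimator of ℓ₁(γ) = P(max_i X_i > γ): E_g[ℓ_as(γ)/N] = P(N ≥ 1). -/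
open MeasureTheory ProbabilityTheory Matrix

/-!
Under the importance density `g = (N / ℓ_as) φ` the likelihood ratio `ℓ_as / N` cancels the
density exactly where `N ≠ 0`, while the density vanishes where `N = 0`; so `E_g[ℓ_as / N]` is
the nominal probability of `{N ≠ 0}`.
-/

lemma div_mul_div_eq_indicator_ne_zero {c : ℝ} (hc : c ≠ 0) (x : ℝ) :
    x / c * (c / x) = {x : ℝ | x ≠ 0}.indicator 1 x := by
  by_cases hx : x = 0
  · simp [hx]
  · rw [Set.indicator_of_mem (show x ∈ {x : ℝ | x ≠ 0} from hx), div_mul_div_cancel₀ hc,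
      div_self hx, Pi.one_apply]

theorem integral_div_withDensity_ofReal_div {α : Type*} [MeasurableSpace α] (μ : Measure α)
    {w : α → ℝ} (hw : Measurable w) (hw0 : 0 ≤ w) {c : ℝ} (hc : 0 < c) :
    ∫ x, c / w x ∂μ.withDensity (fun x => ENNReal.ofReal (w x / c)) =
      μ.real {x | w x ≠ 0} := by
  have hmeas : MeasurableSet {x | w x ≠ 0} := hw (measurableSet_singleton 0).compl
  rw [integral_withDensity_eq_integral_toReal_smul (hw.div_const c).ennreal_ofReal
      (Filter.Eventually.of_forall fun _ => ENNReal.ofReal_lt_top),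
    ← integral_indicator_one hmeas]
  refine integral_congr_ae (Filter.Eventually.of_forall fun x => ?_)
  dsimp only
  rw [ENNReal.toReal_ofReal (div_nonneg (hw0 x) hc.le), smul_eq_mul,
    div_mul_div_eq_indicator_ne_zero hc.ne']
  rfl

lemma measurable_card_filter_mem {ι α : Type*} [Fintype ι] [MeasurableSpace α]
    {s : ι → Set α} [∀ i x, Decidable (x ∈ s i)] (hs : ∀ i, MeasurableSet (s i)) :
    Measurable fun x => (Finset.univ.filter fun i => x ∈ s i).card := by
  simp only [Finset.card_filter]
  exact Finset.measurable_sum _ fun i _ => measurable_const.ite (hs i) measurable_const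

theorem isve_leading_term_unbiased_general {d : ℕ}
    (L : Matrix (Fin d) (Fin d) ℝ) (ν : Fin d → ℝ)
    (γ : ℝ)
    (hlas : 0 < ∑ k, (((Measure.pi fun _ : Fin d => gaussianReal 0 1).map
        (fun z => ν + L.mulVec z)) {y | γ < Real.exp (y k)}).toReal) :
    (∫ y, ((∑ k, (((Measure.pi fun _ : Fin d => gaussianReal 0 1).map
          (fun z => ν + L.mulVec z)) {y | γ < Real.exp (y k)}).toReal) /
        ((Finset.univ.filter fun i => γ < Real.exp (y i)).card : ℝ))
      ∂(((Measure.pi fun _ : Fin d => gaussianReal 0 1).map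
          (fun z => ν + L.mulVec z)).withDensity
        (fun y => ENNReal.ofReal
          (((Finset.univ.filter fun i => γ < Real.exp (y i)).card : ℝ) /
            ∑ k, (((Measure.pi fun _ : Fin d => gaussianReal 0 1).map
              (fun z => ν + L.mulVec z)) {y | γ < Real.exp (y k)}).toReal)))) =
    (((Measure.pi fun _ : Fin d => gaussianReal 0 1).map
        (fun z => ν + L.mulVec z))
      {y | 1 ≤ (Finset.univ.filter fun i => γ < Real.exp (y i)).card}).toReal := by
  have hN : Measurable fun y : Fin d → ℝ =>
      ((Finset.univ.filter fun i => γ < Real.exp (y i)).card : ℝ) :=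
    measurable_from_top.comp <| measurable_card_filter_mem
      (s := fun i => {y : Fin d → ℝ | γ < Real.exp (y i)}) fun i =>
        measurableSet_lt measurable_const (Real.measurable_exp.comp (measurable_pi_apply i))
  rw [integral_div_withDensity_ofReal_div _ hN (fun _ => Nat.cast_nonneg _) hlas]
  simp only [ne_eq, Nat.cast_eq_zero, ← Nat.one_le_iff_ne_zero, Measure.real]

/-- Unbiasedness of the ISVE estimator `ℓ̂₁ = ℓ_as(γ)/N` of
`ℓ₁(γ) = P(max_i X_i > γ) = P(N ≥ 1)` under the mixture density
`g(x) = φ_Σ(x − ν) ∑ₖ 1{x_k > γ} / ℓ_as(γ)`, where `N = ∑ᵢ 1{Xᵢ > γ}`,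
`X = exp(Y)`, `Y ~ N(ν, Σ)` with `Σ = L Lᵀ`, and
`ℓ_as(γ) = ∑ₖ P(X_k > γ) > 0`. -/
theorem isve_leading_term_unbiased {d : ℕ}
    (L : Matrix (Fin d) (Fin d) ℝ) (ν : Fin d → ℝ)
    (hpos : (L * Lᵀ).PosDef) (γ : ℝ)
    (hlas : 0 < ∑ k, (((Measure.pi fun _ : Fin d => gaussianReal 0 1).map
        (fun z => ν + L.mulVec z)) {y | γ < Real.exp (y k)}).toReal) :
    (∫ y, ((∑ k, (((Measure.pi fun _ : Fin d => gaussianReal 0 1).map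
          (fun z => ν + L.mulVec z)) {y | γ < Real.exp (y k)}).toReal) /
        ((Finset.univ.filter fun i => γ < Real.exp (y i)).card : ℝ))
      ∂(((Measure.pi fun _ : Fin d => gaussianReal 0 1).map
          (fun z => ν + L.mulVec z)).withDensity
        (fun y => ENNReal.ofReal
          (((Finset.univ.filter fun i => γ < Real.exp (y i)).card : ℝ) /
            ∑ k, (((Measure.pi fun _ : Fin d => gaussianReal 0 1).map
              (fun z => ν + L.mulVec z)) {y | γ < Real.exp (y k)}).toReal)))) =
    (((Measure.pi fun _ : Fin d => gaussianReal 0 1).map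
        (fun z => ν + L.mulVec z))
      {y | 1 ≤ (Finset.univ.filter fun i => γ < Real.exp (y i)).card}).toReal :=
  isve_leading_term_unbiased_general L ν γ hlas
end

section
/- Let N = Σᵢ 1{Xᵢ > γ} with ℓ_as = Σᵢ P(Xᵢ > γ) and r(γ) = ℓ_as − P(N ≥ 1). Under the mixture measure g, the m-th centered moment of ℓ̂₁ = ℓ_as/N around ℓ₁ = P(N ≥ 1) satisfies E_g|ℓ̂₁ − ℓ₁|^m = Θ(r^m(γ)) + Θ(ℓ_as^{m−1} r(γ)) as γ → ∞, assuming P(N > 1) = Θ(r(γ)) and P_g(N = 1) = Θ(1). -/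
/-!
Since `ℓ₁ = ℓ_as − r`, the `j = 1` term of the moment is `r^m · P_g(N = 1) = Θ(r^m)`. Once
`r ≤ ℓ_as / 4` (eventually, as `r = o(ℓ_as)`), every `j ≥ 2` has deviation
`|ℓ_as / j − ℓ₁| ∈ [ℓ_as / 4, ℓ_as]` and weight `j / ℓ_as ∈ [2 / ℓ_as, d / ℓ_as]`, so these terms
sum to `Θ(ℓ_as^{m−1} P(N > 1)) = Θ(ℓ_as^{m−1} r)`. Both parts are nonnegative, so the two
`Θ`-bounds add.
-/

open Filter Asymptotics

lemma abs_div_sub_sub_mem_Icc {L R x : ℝ} (hL : 0 < L) (hR : 0 ≤ R) (hRL : R ≤ L / 4)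
    (hx : 2 ≤ x) : |L / x - (L - R)| ∈ Set.Icc (L / 4) L := by
  have hLx : 0 < L / x := div_pos hL (by linarith)
  have hLx2 : L / x ≤ L / 2 := div_le_div_of_nonneg_left hL.le two_pos hx
  rw [abs_of_nonpos (by linarith)]
  constructor <;> linarith

lemma pow_abs_div_sub_sub_mul_mem_Icc {L R q x D : ℝ} (k : ℕ) (hL : 0 < L) (hR : 0 ≤ R)
    (hRL : R ≤ L / 4) (hq : 0 ≤ q) (hx : 2 ≤ x) (hxD : x ≤ D) :
    |L / x - (L - R)| ^ (k + 1) * (x * q / L) ∈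
      Set.Icc (2 / 4 ^ (k + 1) * (L ^ k * q)) (D * (L ^ k * q)) := by
  obtain ⟨hlow, hup⟩ := abs_div_sub_sub_mem_Icc hL hR hRL hx
  set a := |L / x - (L - R)| / L with ha
  have hrescale : |L / x - (L - R)| ^ (k + 1) * (x * q / L) = a ^ (k + 1) * x * (L ^ k * q) := by
    rw [ha, div_pow]; field_simp; ring
  have ha_low : 1 / 4 ≤ a := by rw [ha, le_div_iff₀ hL]; linarith
  have ha_up : a ≤ 1 := by rw [ha, div_le_one hL]; exact hup
  have hLq : 0 ≤ L ^ k * q := by positivity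
  rw [hrescale]
  constructor
  · calc 2 / 4 ^ (k + 1) * (L ^ k * q) = (1 / 4) ^ (k + 1) * 2 * (L ^ k * q) := by
          rw [div_pow, one_pow]; ring
      _ ≤ a ^ (k + 1) * x * (L ^ k * q) := by gcongr
  · calc a ^ (k + 1) * x * (L ^ k * q) ≤ 1 ^ (k + 1) * D * (L ^ k * q) := by
          gcongr
      _ = D * (L ^ k * q) := by ring

lemma sum_pow_abs_div_sub_sub_mul_mem_Icc {L R : ℝ} {q : ℕ → ℝ} {s : Finset ℕ} {d : ℕ} (k : ℕ)
    (hL : 0 < L) (hR : 0 ≤ R) (hRL : R ≤ L / 4) (hq : ∀ j ∈ s, 0 ≤ q j)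
    (hs : ∀ j ∈ s, 2 ≤ j ∧ j ≤ d) :
    ∑ j ∈ s, |L / j - (L - R)| ^ (k + 1) * (j * q j / L) ∈
      Set.Icc (2 / 4 ^ (k + 1) * (L ^ k * ∑ j ∈ s, q j)) (d * (L ^ k * ∑ j ∈ s, q j)) := by
  have hterm := fun j (hj : j ∈ s) =>
    pow_abs_div_sub_sub_mul_mem_Icc (x := j) (D := d) k hL hR hRL (hq j hj)
      (by exact_mod_cast (hs j hj).1) (by exact_mod_cast (hs j hj).2)
  simp only [Finset.mul_sum]
  exact ⟨Finset.sum_le_sum fun j hj => (hterm j hj).1,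
    Finset.sum_le_sum fun j hj => (hterm j hj).2⟩

namespace Asymptotics

variable {α : Type*} {l : Filter α}

lemma isBigO_add_left_of_nonneg {f g : α → ℝ} (hf : 0 ≤ᶠ[l] f) (hg : 0 ≤ᶠ[l] g) :
    f =O[l] (f + g) :=
  IsBigO.of_bound 1 <| by
    filter_upwards [hf, hg] with x (hfx : 0 ≤ f x) (hgx : 0 ≤ g x)
    rw [Pi.add_apply, Real.norm_of_nonneg hfx, Real.norm_of_nonneg (add_nonneg hfx hgx)]
    linarith

lemma IsTheta.add_of_nonneg {f₁ f₂ g₁ g₂ : α → ℝ} (h₁ : f₁ =Θ[l] g₁) (h₂ : f₂ =Θ[l] g₂)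
    (hf₁ : 0 ≤ᶠ[l] f₁) (hf₂ : 0 ≤ᶠ[l] f₂) (hg₁ : 0 ≤ᶠ[l] g₁) (hg₂ : 0 ≤ᶠ[l] g₂) :
    (f₁ + f₂) =Θ[l] (g₁ + g₂) := by
  refine ⟨(h₁.isBigO.trans ?_).add (h₂.isBigO.trans ?_),
    (h₁.symm.isBigO.trans ?_).add (h₂.symm.isBigO.trans ?_)⟩
  · exact isBigO_add_left_of_nonneg hg₁ hg₂
  · exact add_comm g₂ g₁ ▸ isBigO_add_left_of_nonneg hg₂ hg₁
  · exact isBigO_add_left_of_nonneg hf₁ hf₂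
  · exact add_comm f₂ f₁ ▸ isBigO_add_left_of_nonneg hf₂ hf₁

lemma IsTheta.of_bounds {f g : α → ℝ} {c C : ℝ} (hc : 0 < c) (hg : 0 ≤ᶠ[l] g)
    (h : ∀ᶠ x in l, f x ∈ Set.Icc (c * g x) (C * g x)) : f =Θ[l] g := by
  have hf : 0 ≤ᶠ[l] f := by
    filter_upwards [hg, h] with x (hgx : 0 ≤ g x) hx using (mul_nonneg hc.le hgx).trans hx.1
  refine ⟨IsBigO.of_bound C ?_, IsBigO.of_bound c⁻¹ ?_⟩ <;>
    filter_upwards [hf, hg, h] with x (hfx : 0 ≤ f x) (hgx : 0 ≤ g x) hx <;>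
    rw [Real.norm_of_nonneg hfx, Real.norm_of_nonneg hgx]
  · exact hx.2
  · rw [inv_mul_eq_div, le_div_iff₀ hc, mul_comm]
    exact hx.1

end Asymptotics

theorem isve_centered_moment_asymptotics_general
    (d : ℕ) (hd : 2 ≤ d) (p : ℕ → ℝ → ℝ) (ℓas ℓ1 r : ℝ → ℝ)
    (hp0 : ∀ᶠ γ in atTop, ∀ j, 0 ≤ p j γ)
    (hr : ∀ γ, r γ = ℓas γ - ℓ1 γ)
    (hposr : ∀ᶠ γ in atTop, 0 < r γ)
    (hposl : ∀ᶠ γ in atTop, 0 < ℓas γ)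
    (hro : r =o[atTop] ℓas)
    (hPg1 : (fun γ => p 1 γ / ℓas γ) =Θ[atTop] (fun _ => (1 : ℝ)))
    (hPgt : (fun γ => ∑ j ∈ Finset.Icc 2 d, p j γ) =Θ[atTop] r)
    (m : ℕ) (hm : 1 ≤ m) :
    (fun γ => ∑ j ∈ Finset.Icc 1 d,
        |ℓas γ / (j : ℝ) - ℓ1 γ| ^ m * ((j : ℝ) * p j γ / ℓas γ))
      =Θ[atTop] (fun γ => r γ ^ m + ℓas γ ^ (m - 1) * r γ) := by
  obtain ⟨k, rfl⟩ : ∃ k, m = k + 1 := ⟨m - 1, by omega⟩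
  rw [Nat.add_sub_cancel]
  have hℓ1r : ∀ γ, ℓ1 γ = ℓas γ - r γ := fun γ => by rw [hr]; ring
  set S : ℝ → ℝ := fun γ => ∑ j ∈ Finset.Icc 2 d,
    |ℓas γ / (j : ℝ) - (ℓas γ - r γ)| ^ (k + 1) * ((j : ℝ) * p j γ / ℓas γ)
  have hsplit : (fun γ => ∑ j ∈ Finset.Icc 1 d,
      |ℓas γ / (j : ℝ) - ℓ1 γ| ^ (k + 1) * ((j : ℝ) * p j γ / ℓas γ))
        = (fun γ => |r γ| ^ (k + 1) * (p 1 γ / ℓas γ)) + S := by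
    ext γ
    rw [Finset.Icc_eq_cons_Ioc (by omega), Finset.sum_cons, ← Finset.Icc_add_one_left_eq_Ioc]
    simp [hℓ1r, S]
  have hhead : (fun γ => |r γ| ^ (k + 1) * (p 1 γ / ℓas γ)) =Θ[atTop] fun γ => r γ ^ (k + 1) := by
    simpa only [mul_one, Real.norm_eq_abs] using
      ((isTheta_norm_left.2 (isTheta_refl r atTop)).pow (k + 1)).mul hPg1
  have htail : S =Θ[atTop] fun γ => ℓas γ ^ k * ∑ j ∈ Finset.Icc 2 d, p j γ := by
    refine IsTheta.of_bounds (c := 2 / 4 ^ (k + 1)) (C := d) (by positivity) ?_ ?_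
    · filter_upwards [hp0, hposl] with γ hp hL using
        mul_nonneg (pow_nonneg hL.le k) (Finset.sum_nonneg fun j _ => hp j)
    · filter_upwards [hp0, hposr, hposl, hro.def (c := 1 / 4) (by norm_num)]
        with γ hp hR hL hRL
      rw [Real.norm_of_nonneg hR.le, Real.norm_of_nonneg hL.le] at hRL
      exact sum_pow_abs_div_sub_sub_mul_mem_Icc k hL hR.le (by linarith) (fun j _ => hp j)
        fun j => Finset.mem_Icc.1
  rw [hsplit]
  refine hhead.add_of_nonneg (htail.trans ((isTheta_refl _ _).mul hPgt)) ?_ ?_ ?_ ?_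
  · filter_upwards [hp0, hposl] with γ hp hL using
      mul_nonneg (by positivity) (div_nonneg (hp 1) hL.le)
  · filter_upwards [hp0, hposl] with γ hp hL using Finset.sum_nonneg fun j _ =>
      mul_nonneg (by positivity) (div_nonneg (mul_nonneg j.cast_nonneg (hp j)) hL.le)
  · filter_upwards [hposr] with γ hR using pow_nonneg hR.le _
  · filter_upwards [hposr, hposl] with γ hR hL using mul_nonneg (pow_nonneg hL.le _) hR.le

/-- Centered moments of the ISVE leading-term estimator
`ℓ̂₁ = ℓ_as/N` under the mixture measure `g`. With `p j γ = P(N = j)`,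
`P_g(N = j) = j p j γ / ℓ_as γ`, `ℓ₁ = P(N ≥ 1) = ∑_{j=1}^d p j`,
`r = ℓ_as − ℓ₁`, assuming `P(N > 1) = Θ(r)`, `P_g(N = 1) = Θ(1)` and
`r = o(ℓ_as)`, one has, for each `m ≥ 1`,
`E_g|ℓ̂₁ − ℓ₁|^m = Θ(r^m) + Θ(ℓ_as^{m−1} r)` as `γ → ∞`. -/
theorem isve_centered_moment_asymptotics
    (d : ℕ) (hd : 2 ≤ d) (p : ℕ → ℝ → ℝ) (ℓas ℓ1 r : ℝ → ℝ)
    (hp0 : ∀ᶠ γ in atTop, ∀ j, 0 ≤ p j γ)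
    (hℓ1 : ∀ γ, ℓ1 γ = ∑ j ∈ Finset.Icc 1 d, p j γ)
    (hr : ∀ γ, r γ = ℓas γ - ℓ1 γ)
    (hposr : ∀ᶠ γ in atTop, 0 < r γ)
    (hposl : ∀ᶠ γ in atTop, 0 < ℓas γ)
    (hro : r =o[atTop] ℓas)
    (hPg1 : (fun γ => p 1 γ / ℓas γ) =Θ[atTop] (fun _ => (1 : ℝ)))
    (hPgt : (fun γ => ∑ j ∈ Finset.Icc 2 d, p j γ) =Θ[atTop] r)
    (m : ℕ) (hm : 1 ≤ m) :
    (fun γ => ∑ j ∈ Finset.Icc 1 d,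
        |ℓas γ / (j : ℝ) - ℓ1 γ| ^ m * ((j : ℝ) * p j γ / ℓas γ))
      =Θ[atTop] (fun γ => r γ ^ m + ℓas γ ^ (m - 1) * r γ) :=
  isve_centered_moment_asymptotics_general d hd p ℓas ℓ1 r hp0 hr hposr hposl hro hPg1 hPgt m hm
end

section
/- With r(γ) = o(ℓ_as(γ)), the sample variance S_n² of n i.i.d. replications of ℓ̂₁ satisfies Var(S_n²)/Var(ℓ̂₁)² = Θ(ℓ_as(γ)/r(γ)) as γ → ∞; consequently, if ℓ_as(γ)/r(γ) grows superpolynomially in γ (e.g. like exp(c ln²γ)), S_n² is not a logarithmically efficient estimator of Var(ℓ̂₁): limsup_{γ→∞} ln Var(S_n²)/ln Var(ℓ̂₁) < 2. -/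
open Filter Asymptotics

private lemma aux_low (K t w x : ℝ) (hx : x ≠ 0) (hw : w ≠ 0) :
    K / (2 * x) * t = K * t * w / 2 / x / w := by
  field_simp

private lemma aux_up (K t w x : ℝ) (hx : x ≠ 0) (hw : w ≠ 0) :
    (K + 1) / x * t = (K * t * w + t * w) / x / w := by
  field_simp

private lemma aux_cancel (a b t : ℝ) (ha : a ≠ 0) (hb : b ≠ 0) :
    t = a / b * (b / a * t) := by
  field_simp

private lemma aux_two (K : ℝ) (hK : K ≠ 0) : (2 : ℝ) = K * (2 / K) := by
  field_simp

set_option maxHeartbeats 1600000 in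
/-- Inefficiency of the sample variance of the ISVE leading-term
estimator. With `r = o(ℓ_as)`, centered moment asymptotics
`Var(ℓ̂₁) = v = Θ(r² + ℓ_as r)` and `E(ℓ̂₁ − ℓ₁)⁴ = M4c = Θ(r⁴ + ℓ_as³ r)`, and
the identity `n Var(S_n²) = M4c + (2/(n−1) − 1) v²`, one has
`Var(S_n²)/Var(ℓ̂₁)² = Θ(ℓ_as/r)`; consequently, if `ℓ_as/r` grows
superpolynomially (relative to `1/v`), `S_n²` is not logarithmically
efficient: `limsup ln Var(S_n²)/ln Var(ℓ̂₁) < 2`. -/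
theorem isve_sample_variance_inefficiency
    (ℓas r v M4c VS : ℝ → ℝ) (n : ℕ) (hn : 2 ≤ n)
    (hposr : ∀ᶠ γ in atTop, 0 < r γ)
    (hposl : ∀ᶠ γ in atTop, 0 < ℓas γ)
    (hro : r =o[atTop] ℓas)
    (hv : v =Θ[atTop] fun γ => r γ ^ 2 + ℓas γ * r γ)
    (hM4 : M4c =Θ[atTop] fun γ => r γ ^ 4 + ℓas γ ^ 3 * r γ)
    (hVS : ∀ γ, (n : ℝ) * VS γ = M4c γ + (2 / ((n : ℝ) - 1) - 1) * (v γ) ^ 2)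
    (hvpos : ∀ᶠ γ in atTop, 0 < v γ)
    (hlogv : Tendsto (fun γ => Real.log (v γ)) atTop atBot)
    (hgrow : ∃ ε > (0 : ℝ), ∀ᶠ γ in atTop,
      ε * |Real.log (v γ)| ≤ Real.log (ℓas γ / r γ)) :
    ((fun γ => VS γ / (v γ) ^ 2) =Θ[atTop] fun γ => ℓas γ / r γ) ∧
      limsup (fun γ => Real.log (VS γ) / Real.log (v γ)) atTop < 2 := by
  obtain ⟨ε, hε, hεev⟩ := hgrow
  obtain ⟨cv, cvpos, hcv⟩ := hv.1.exists_pos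
  obtain ⟨cv', cv'pos, hcv'⟩ := hv.2.exists_pos
  obtain ⟨cm, cmpos, hcm⟩ := hM4.1.exists_pos
  obtain ⟨cm', cm'pos, hcm'⟩ := hM4.2.exists_pos
  have hn1 : (1 : ℝ) ≤ (n : ℝ) - 1 := by
    have : (2 : ℝ) ≤ (n : ℝ) := by exact_mod_cast hn
    linarith
  have hnpos : (0 : ℝ) < (n : ℝ) := by linarith
  have hn0 : (n : ℝ) ≠ 0 := ne_of_gt hnpos
  set c : ℝ := 2 / ((n : ℝ) - 1) - 1 with hcdef
  have hcabs : |c| ≤ 1 := by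
    have h1 : (0 : ℝ) < (n : ℝ) - 1 := by linarith
    have h2 : 2 / ((n : ℝ) - 1) ≤ 2 := by
      rw [div_le_iff₀ h1]; nlinarith
    have h3 : 0 < 2 / ((n : ℝ) - 1) := by positivity
    rw [abs_le]; constructor <;> simp only [hcdef] <;> linarith
  set K1 : ℝ := 1 / (4 * cm' * cv ^ 2) with hK1def
  set K2 : ℝ := 2 * cm * cv' ^ 2 with hK2def
  have hK1 : 0 < K1 := by positivity
  have hK2 : 0 < K2 := by positivity
  -- ℓas / r → ∞
  have ht : Tendsto (fun γ => ℓas γ / r γ) atTop atTop := by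
    rw [tendsto_atTop]
    intro b
    have hmb : (0:ℝ) < max b 1 := lt_of_lt_of_le one_pos (le_max_right b 1)
    have h1 : (0 : ℝ) < (max b 1)⁻¹ := by positivity
    filter_upwards [hro.def h1, hposr, hposl] with γ h hr hl
    rw [Real.norm_eq_abs, Real.norm_eq_abs, abs_of_pos hr, abs_of_pos hl] at h
    have : max b 1 ≤ ℓas γ / r γ := by
      rw [le_div_iff₀ hr]
      calc max b 1 * r γ ≤ max b 1 * ((max b 1)⁻¹ * ℓas γ) :=
            mul_le_mul_of_nonneg_left h (le_of_lt hmb)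
        _ = ℓas γ := by field_simp
    exact le_trans (le_max_left b 1) this
  -- main eventual bounds
  have hbound : ∀ᶠ γ in atTop,
      K1 / (2 * n) * (ℓas γ / r γ) ≤ |VS γ| / v γ ^ 2 ∧
      |VS γ| / v γ ^ 2 ≤ (K2 + 1) / n * (ℓas γ / r γ) ∧
      0 < ℓas γ / r γ ∧ 0 < v γ := by
    filter_upwards [hposr, hposl, hvpos, hcv.bound, hcv'.bound, hcm.bound, hcm'.bound,
      hro.def one_pos, ht.eventually_ge_atTop (max (2 / K1) 1)] with γ hr hl hvp bv bv' bm bm' hrl htt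
    rw [Real.norm_eq_abs, Real.norm_eq_abs, abs_of_pos hr, abs_of_pos hl, one_mul] at hrl
    have hR0 : r γ ≠ 0 := ne_of_gt hr
    have hL0 : ℓas γ ≠ 0 := ne_of_gt hl
    have hg : (0:ℝ) < r γ ^ 2 + ℓas γ * r γ := by positivity
    have hg4 : (0:ℝ) < r γ ^ 4 + ℓas γ ^ 3 * r γ := by positivity
    simp only [Real.norm_eq_abs] at bv bv' bm bm'
    rw [abs_of_pos hvp, abs_of_pos hg] at bv bv'
    rw [abs_of_pos hg4] at bm bm'
    have hv2pos : 0 < v γ ^ 2 := by positivity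
    have ht0 : 0 < ℓas γ / r γ := by positivity
    set t : ℝ := ℓas γ / r γ with htdef
    -- two-sided bounds
    have hr2 : r γ ^ 2 ≤ ℓas γ * r γ := by
      linarith only [mul_le_mul_of_nonneg_right hrl (le_of_lt hr)]
    have hr3 : r γ ^ 3 ≤ ℓas γ ^ 3 := pow_le_pow_left₀ (le_of_lt hr) hrl 3
    have hr4 : r γ ^ 4 ≤ ℓas γ ^ 3 * r γ := by
      linarith only [mul_le_mul_of_nonneg_right hr3 (le_of_lt hr)]
    have hvub : v γ ≤ 2 * cv * (ℓas γ * r γ) := by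
      linarith only [bv, mul_le_mul_of_nonneg_left hr2 (le_of_lt cvpos)]
    have hvlb : ℓas γ * r γ ≤ cv' * v γ := by
      linarith only [bv', sq_nonneg (r γ)]
    have hv2ub : v γ ^ 2 ≤ 4 * cv ^ 2 * (ℓas γ * r γ) ^ 2 := by
      linarith only [mul_le_mul hvub hvub (le_of_lt hvp)
        (by positivity : (0:ℝ) ≤ 2 * cv * (ℓas γ * r γ))]
    have hv2lb : (ℓas γ * r γ) ^ 2 / cv' ^ 2 ≤ v γ ^ 2 := by
      rw [div_le_iff₀ (by positivity)]
      linarith only [mul_le_mul hvlb hvlb (by positivity : (0:ℝ) ≤ ℓas γ * r γ)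
        (by positivity : (0:ℝ) ≤ cv' * v γ)]
    have hMub : |M4c γ| ≤ 2 * cm * (ℓas γ ^ 3 * r γ) := by
      linarith only [bm, mul_le_mul_of_nonneg_left hr4 (le_of_lt cmpos)]
    have hMlb : ℓas γ ^ 3 * r γ / cm' ≤ |M4c γ| := by
      rw [div_le_iff₀ cm'pos]
      linarith only [bm', le_of_lt (pow_pos hr 4)]
    -- ratio bounds on |M4c| / v²
    have hratlb : K1 * t * v γ ^ 2 ≤ |M4c γ| := by
      have h2 : K1 * t * (4 * cv ^ 2 * (ℓas γ * r γ) ^ 2) = ℓas γ ^ 3 * r γ / cm' := by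
        rw [hK1def, htdef]; field_simp
      have h3 := mul_le_mul_of_nonneg_left hv2ub (le_of_lt (mul_pos hK1 ht0))
      have h4 : K1 * t * v γ ^ 2 ≤ K1 * t * (4 * cv ^ 2 * (ℓas γ * r γ) ^ 2) := by
        calc K1 * t * v γ ^ 2 = K1 * t * (v γ ^ 2) := by ring
          _ ≤ K1 * t * (4 * cv ^ 2 * (ℓas γ * r γ) ^ 2) := h3
      linarith only [h2, h4, hMlb]
    have hratub : |M4c γ| ≤ K2 * t * v γ ^ 2 := by
      have h2 : K2 * t * ((ℓas γ * r γ) ^ 2 / cv' ^ 2) = 2 * cm * (ℓas γ ^ 3 * r γ) := by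
        rw [hK2def, htdef]; field_simp
      have h3 := mul_le_mul_of_nonneg_left hv2lb (le_of_lt (mul_pos hK2 ht0))
      have h4 : K2 * t * ((ℓas γ * r γ) ^ 2 / cv' ^ 2) ≤ K2 * t * v γ ^ 2 := by
        calc K2 * t * ((ℓas γ * r γ) ^ 2 / cv' ^ 2) ≤ K2 * t * (v γ ^ 2) := h3
          _ = K2 * t * v γ ^ 2 := by ring
      linarith only [h2, h4, hMub]
    -- |VS| = |M4c + c v²| / n
    have habsVS : |VS γ| = |M4c γ + c * v γ ^ 2| / n := by
      rw [eq_div_iff hn0, ← abs_of_pos hnpos, ← abs_mul, mul_comm, hVS γ]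
    have habsc : |c * v γ ^ 2| ≤ v γ ^ 2 := by
      rw [abs_mul, abs_of_pos hv2pos]
      nlinarith [abs_nonneg c]
    have tri1 : |M4c γ| ≤ |M4c γ + c * v γ ^ 2| + |c * v γ ^ 2| := by
      have h := abs_add_le (M4c γ + c * v γ ^ 2) (-(c * v γ ^ 2))
      rw [abs_neg] at h
      have he : M4c γ + c * v γ ^ 2 + -(c * v γ ^ 2) = M4c γ := by ring
      rw [he] at h
      exact h
    have tri2 : |M4c γ + c * v γ ^ 2| ≤ |M4c γ| + |c * v γ ^ 2| := abs_add_le _ _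
    have hK1t : 2 ≤ K1 * t := by
      have h4 : 2 / K1 ≤ t := le_trans (le_max_left _ _) htt
      calc (2:ℝ) = K1 * (2 / K1) := aux_two K1 (ne_of_gt hK1)
        _ ≤ K1 * t := mul_le_mul_of_nonneg_left h4 (le_of_lt hK1)
    have ht1 : 1 ≤ t := le_trans (le_max_right _ _) htt
    have hv2ne : v γ ^ 2 ≠ 0 := ne_of_gt hv2pos
    have hXlb : K1 * t * v γ ^ 2 / 2 ≤ |M4c γ + c * v γ ^ 2| := by
      linarith only [tri1, habsc, hratlb, mul_le_mul_of_nonneg_right hK1t (le_of_lt hv2pos)]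
    have hXub : |M4c γ + c * v γ ^ 2| ≤ K2 * t * v γ ^ 2 + t * v γ ^ 2 := by
      linarith only [tri2, habsc, hratub, mul_le_mul_of_nonneg_right ht1 (le_of_lt hv2pos)]
    refine ⟨?_, ?_, ht0, hvp⟩
    · calc K1 / (2 * n) * t = K1 * t * v γ ^ 2 / 2 / n / v γ ^ 2 :=
            aux_low K1 t (v γ ^ 2) (n : ℝ) hn0 hv2ne
        _ ≤ |M4c γ + c * v γ ^ 2| / n / v γ ^ 2 := by gcongr
        _ = |VS γ| / v γ ^ 2 := by rw [habsVS]
    · calc |VS γ| / v γ ^ 2 = |M4c γ + c * v γ ^ 2| / n / v γ ^ 2 := by rw [habsVS]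
        _ ≤ (K2 * t * v γ ^ 2 + t * v γ ^ 2) / n / v γ ^ 2 := by gcongr
        _ = (K2 + 1) / n * t := (aux_up K2 t (v γ ^ 2) (n : ℝ) hn0 hv2ne).symm
  -- first conclusion: Θ
  have hTheta : (fun γ => VS γ / (v γ) ^ 2) =Θ[atTop] fun γ => ℓas γ / r γ := by
    constructor
    · apply IsBigO.of_bound ((K2 + 1) / n)
      filter_upwards [hbound] with γ ⟨h1, h2, h3, h4⟩
      rw [Real.norm_eq_abs, Real.norm_eq_abs, abs_div, abs_of_pos (by positivity : 0 < v γ ^ 2),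
        abs_of_pos h3]
      exact h2
    · apply IsBigO.of_bound (2 * n / K1)
      filter_upwards [hbound] with γ ⟨h1, h2, h3, h4⟩
      rw [Real.norm_eq_abs, Real.norm_eq_abs, abs_of_pos h3, abs_div,
        abs_of_pos (by positivity : 0 < v γ ^ 2)]
      have hpos : (0:ℝ) < 2 * n / K1 := div_pos (by positivity) hK1
      calc ℓas γ / r γ = (2 * n / K1) * (K1 / (2 * n) * (ℓas γ / r γ)) :=
            aux_cancel (2 * n) K1 (ℓas γ / r γ) (by positivity) (ne_of_gt hK1)
        _ ≤ (2 * n / K1) * (|VS γ| / v γ ^ 2) := mul_le_mul_of_nonneg_left h1 (le_of_lt hpos)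
  refine ⟨hTheta, ?_⟩
  -- second conclusion
  set L0 : ℝ := Real.log (K1 / (2 * n)) with hL0def
  have hev : ∀ᶠ γ in atTop, Real.log (VS γ) / Real.log (v γ) ≤ 2 - ε / 2 := by
    filter_upwards [hbound, hεev,
      hlogv.eventually_le_atBot (min (-1) (2 * L0 / ε))] with γ ⟨h1, h2, h3, h4⟩ hgr hlv
    have hlvneg : Real.log (v γ) < 0 :=
      lt_of_le_of_lt hlv (lt_of_le_of_lt (min_le_left _ _) (by norm_num))
    have hlv2 : Real.log (v γ) ≤ 2 * L0 / ε := le_trans hlv (min_le_right _ _)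
    have hL0ge : (ε / 2) * Real.log (v γ) ≤ L0 := by
      rw [le_div_iff₀ hε] at hlv2; linarith only [hlv2]
    have hv2pos : 0 < v γ ^ 2 := by positivity
    have h0 : 0 < |VS γ| / v γ ^ 2 := lt_of_lt_of_le (by positivity) h1
    have hVSpos : 0 < |VS γ| := by
      have := mul_pos h0 hv2pos
      rwa [div_mul_cancel₀] at this
      exact ne_of_gt hv2pos
    have hlogratio : -(ε / 2) * Real.log (v γ) ≤ Real.log (|VS γ| / v γ ^ 2) := by
      have hq : (0:ℝ) < K1 / (2 * n) := div_pos hK1 (by positivity)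
      have hstep : Real.log (K1 / (2 * n) * (ℓas γ / r γ)) ≤ Real.log (|VS γ| / v γ ^ 2) :=
        Real.log_le_log (mul_pos hq h3) h1
      rw [Real.log_mul (ne_of_gt hq) (ne_of_gt h3)] at hstep
      have habs : |Real.log (v γ)| = -Real.log (v γ) := abs_of_neg hlvneg
      rw [habs] at hgr
      linarith
    have hlogVS : (2 - ε / 2) * Real.log (v γ) ≤ Real.log (VS γ) := by
      have hsplit : Real.log (|VS γ| / v γ ^ 2) = Real.log (VS γ) - 2 * Real.log (v γ) := by
        rw [Real.log_div (ne_of_gt hVSpos) (ne_of_gt hv2pos), Real.log_abs, Real.log_pow]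
        push_cast; ring
      rw [hsplit] at hlogratio
      linarith
    rw [div_le_iff_of_neg hlvneg]
    linarith
  rw [limsup_eq]
  by_cases hbdd : BddBelow {a | ∀ᶠ γ in atTop, Real.log (VS γ) / Real.log (v γ) ≤ a}
  · exact lt_of_le_of_lt (csInf_le hbdd hev) (by linarith)
  · rw [Real.sInf_of_not_bddBelow hbdd]; norm_num
end
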